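/- Let φ, ψ be two higher spin Killing spinors on a Riemannian spin manifold with the same real Killing number μ. Then the symmetric (0,m)-tensor K(X₁,…,X_m) := Re⟨p_j(X₁)⊙⋯⊙p_j(X_m)φ, ψ⟩ (symmetrized product of Clifford homomorphisms) is a Killing tensor: the complete symmetrization of ∇K vanishes, i.e. Σ_{σ∈𝔖_{m+1}} (∇_{X_{σ(0)}}K)(X_{σ(1)},…,X_{σ(m)}) = 0 for all vector fields X₀,…,X_m. -/

import Mathlib

/-!
By the Killing equation and the skew-adjointness of `p_j`, the derivative `(∇_Y K)(X₁,…,X_m)`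
equals `μ Re⟨[S(X₁,…,X_m), p_j(Y)] φ, ψ⟩`, where `S` is the symmetrized product. After summing
over all permutations of `(X₀,…,X_m)`, both `Σ_σ S(X_σ(1),…,X_σ(m)) p_j(X_σ(0))` and
`Σ_σ p_j(X_σ(0)) S(X_σ(1),…,X_σ(m))` equal the full symmetrization of
`p_j(X₀)⋯p_j(X_m)`, so the commutators cancel.
-/

open scoped ComplexInnerProductSpace

open Equiv Finset

section Symmetrization

variable {R : Type*} [Semiring R] {m : ℕ}

def symmetrizedProd {k : ℕ} (x : Fin k → R) : R :=
  ∑ ρ : Perm (Fin k), (List.ofFn fun i => x (ρ i)).prod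

theorem sum_perm_prod_succ_mul (x : Fin (m + 1) → R) (τ : Perm (Fin m)) :
    ∑ σ : Perm (Fin (m + 1)), (List.ofFn fun i => x (σ (τ i).succ)).prod * x (σ 0) =
      symmetrizedProd x := by
  -- `σ * e` reads `σ (τ 0).succ, …, σ (τ (m-1)).succ, σ 0`
  let e : Perm (Fin (m + 1)) :=
    (finSuccEquivLast.trans (Equiv.optionCongr τ)).trans (finSuccEquiv m).symm
  refine Fintype.sum_equiv (Equiv.mulRight e) _ _ fun σ => ?_
  rw [List.ofFn_succ', List.prod_concat]
  simp [e, Perm.mul_apply]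

theorem sum_perm_mul_prod_succ (x : Fin (m + 1) → R) (τ : Perm (Fin m)) :
    ∑ σ : Perm (Fin (m + 1)), x (σ 0) * (List.ofFn fun i => x (σ (τ i).succ)).prod =
      symmetrizedProd x := by
  let e : Perm (Fin (m + 1)) :=
    ((finSuccEquiv m).trans (Equiv.optionCongr τ)).trans (finSuccEquiv m).symm
  refine Fintype.sum_equiv (Equiv.mulRight e) _ _ fun σ => ?_
  rw [List.ofFn_succ, List.prod_cons]
  simp [e, Perm.mul_apply]

theorem sum_perm_symmetrizedProd_succ_mul (x : Fin (m + 1) → R) :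
    ∑ σ : Perm (Fin (m + 1)), symmetrizedProd (fun i => x (σ i.succ)) * x (σ 0) =
      m.factorial • symmetrizedProd x := by
  conv_lhs => simp only [symmetrizedProd, sum_mul]
  rw [sum_comm]
  simp [sum_perm_prod_succ_mul, Fintype.card_perm]

theorem sum_perm_mul_symmetrizedProd_succ (x : Fin (m + 1) → R) :
    ∑ σ : Perm (Fin (m + 1)), x (σ 0) * symmetrizedProd (fun i => x (σ i.succ)) =
      m.factorial • symmetrizedProd x := by
  conv_lhs => simp only [symmetrizedProd, mul_sum]
  rw [sum_comm]
  simp [sum_perm_mul_prod_succ, Fintype.card_perm]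

end Symmetrization

theorem sum_perm_commutator_symmetrizedProd_succ {R : Type*} [Ring R] {m : ℕ}
    (x : Fin (m + 1) → R) :
    ∑ σ : Perm (Fin (m + 1)),
      (symmetrizedProd (fun i => x (σ i.succ)) * x (σ 0) -
        x (σ 0) * symmetrizedProd (fun i => x (σ i.succ))) = 0 := by
  rw [sum_sub_distrib, sum_perm_symmetrizedProd_succ_mul, sum_perm_mul_symmetrizedProd_succ,
    sub_self]

theorem re_inner_add_re_inner_eq_commutator {W : Type*} [NormedAddCommGroup W]
    [InnerProductSpace ℂ W] [FiniteDimensional ℂ W] (S A : W →ₗ[ℂ] W)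
    (hA : LinearMap.adjoint A = -A) (μ : ℝ) (φ ψ : W) :
    (⟪S ((μ : ℂ) • A φ), ψ⟫).re + (⟪S φ, (μ : ℂ) • A ψ⟫).re =
      μ * (⟪(S * A - A * S) φ, ψ⟫).re := by
  have hskew : ⟪S φ, A ψ⟫ = -⟪A (S φ), ψ⟫ := by
    rw [← LinearMap.adjoint_inner_left, hA, LinearMap.neg_apply, inner_neg_left]
  rw [map_smul, inner_smul_left, inner_smul_right, hskew, LinearMap.sub_apply, inner_sub_left]
  simp only [Complex.conj_ofReal, Complex.mul_re, Complex.ofReal_re, Complex.ofReal_im, zero_mul,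
    sub_zero, mul_neg, Complex.neg_re, Module.End.mul_apply, Complex.sub_re]
  ring

theorem killing_spinors_give_killing_tensor (n m : ℕ) (W : Type*) [NormedAddCommGroup W]
    [InnerProductSpace ℂ W] [FiniteDimensional ℂ W]
    (p : EuclideanSpace ℝ (Fin n) →ₗ[ℝ] (W →ₗ[ℂ] W))
    (hskew : ∀ X, LinearMap.adjoint (p X) = -(p X))
    (μ : ℝ) (φ ψ : W)
    (symProd : (Fin m → EuclideanSpace ℝ (Fin n)) → W →ₗ[ℂ] W)
    (hsym : ∀ X, symProd X = ((m.factorial : ℂ))⁻¹ •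
      ∑ τ : Equiv.Perm (Fin m),
        (List.ofFn fun i => p (X (τ i))).foldr (· ∘ₗ ·) LinearMap.id)
    (nablaK : EuclideanSpace ℝ (Fin n) → (Fin m → EuclideanSpace ℝ (Fin n)) → ℝ)
    (hleibniz : ∀ Y X, nablaK Y X
      = (⟪symProd X ((μ : ℂ) • p Y φ), ψ⟫).re + (⟪symProd X φ, (μ : ℂ) • p Y ψ⟫).re) :
    ∀ X : Fin (m + 1) → EuclideanSpace ℝ (Fin n),
      ∑ σ : Equiv.Perm (Fin (m + 1)),
        nablaK (X (σ 0)) (fun i => X (σ i.succ)) = 0 := by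
  intro X
  have hsym' (Y : Fin m → EuclideanSpace ℝ (Fin n)) :
      symProd Y = ((m.factorial : ℂ))⁻¹ • symmetrizedProd fun i => p (Y i) :=
    -- in `Module.End`, `List.prod` is by definition the fold of `∘ₗ` from `id`
    hsym Y
  have hcomm : ∑ σ : Perm (Fin (m + 1)),
      (symProd (fun i => X (σ i.succ)) * p (X (σ 0)) -
        p (X (σ 0)) * symProd (fun i => X (σ i.succ))) = 0 := by
    simp_rw [hsym', smul_mul_assoc, mul_smul_comm, ← smul_sub, ← smul_sum,
      sum_perm_commutator_symmetrizedProd_succ fun i => p (X i), smul_zero]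
  calc ∑ σ : Perm (Fin (m + 1)), nablaK (X (σ 0)) (fun i => X (σ i.succ))
      = ∑ σ : Perm (Fin (m + 1)), μ * (⟪(symProd (fun i => X (σ i.succ)) * p (X (σ 0)) -
          p (X (σ 0)) * symProd (fun i => X (σ i.succ))) φ, ψ⟫).re :=
        sum_congr rfl fun σ _ =>
          (hleibniz _ _).trans (re_inner_add_re_inner_eq_commutator _ _ (hskew _) μ φ ψ)
    _ = μ * (⟪(∑ σ : Perm (Fin (m + 1)), (symProd (fun i => X (σ i.succ)) * p (X (σ 0)) -
          p (X (σ 0)) * symProd (fun i => X (σ i.succ)))) φ, ψ⟫).re := by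
        rw [LinearMap.sum_apply, sum_inner, Complex.re_sum, mul_sum]
    _ = 0 := by rw [hcomm, LinearMap.zero_apply, inner_zero_left, Complex.zero_re, mul_zero]
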